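/- arXiv:1309.6980 — 13 statements merged into one kernel-verified Lean document; each statement's English description precedes it below -/
import Mathlib

section
/- Let A, B be finite sets of integers, each consisting of integers whose greatest common divisor is 1, with |A| ≥ 2 and |B| ≥ 2, and suppose A·B = P \ {0} for some arithmetic progression P of integers with common difference d. Then for any two elements a₁, a₂ ∈ A, d divides a₁ - a₂; likewise for any two elements b₁, b₂ ∈ B, d divides b₁ - b₂. -/
/-! Every element of `A·B` is `≡ a (mod d)`, so for `a₁, a₂ ∈ A` and every `b ∈ B`, `d` divides
`a₁b - a₂b = (a₁ - a₂)b`; hence `d` divides `(a₁ - a₂)·gcd B = a₁ - a₂`. Symmetrically for `B`. -/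
open Finset Pointwise

theorem dvd_of_forall_dvd_mul_of_gcd_eq_one {ι α : Type*} [CommMonoidWithZero α]
    [StrongNormalizedGCDMonoid α] {s : Finset ι} {f : ι → α} {c d : α}
    (hs : s.gcd f = 1) (h : ∀ i ∈ s, d ∣ c * f i) : d ∣ c := by
  have hgcd : d ∣ s.gcd (fun i => c * f i) := Finset.dvd_gcd_iff.mpr h
  rwa [Finset.gcd_mul_left, hs, mul_one, dvd_normalize_iff] at hgcd

theorem dvd_sub_of_mem_image_range {α : Type*} [CommRing α] [DecidableEq α] {a d x : α} {n : ℕ}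
    (hx : x ∈ (range n).image (fun i : ℕ => a + (i : α) * d)) : d ∣ x - a := by
  obtain ⟨i, -, rfl⟩ := Finset.mem_image.mp hx
  exact ⟨i, by ring⟩

theorem dvd_sub_of_forall_mem_mul_dvd_sub {α : Type*} [CommRing α] [StrongNormalizedGCDMonoid α]
    [DecidableEq α] {A B : Finset α} {a d : α} (hB : B.gcd id = 1)
    (hAB : ∀ x ∈ A * B, d ∣ x - a) {a₁ a₂ : α} (h₁ : a₁ ∈ A) (h₂ : a₂ ∈ A) :
    d ∣ a₁ - a₂ :=
  dvd_of_forall_dvd_mul_of_gcd_eq_one hB fun b hb => by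
    have hsub := dvd_sub (hAB _ (mul_mem_mul h₁ hb)) (hAB _ (mul_mem_mul h₂ hb))
    rwa [sub_sub_sub_cancel_right, ← sub_mul] at hsub

theorem diff_divides_of_primitive_decomposition_general
    (A B P : Finset ℤ) (a d : ℤ) (n : ℕ)
    (hAgcd : A.gcd id = 1) (hBgcd : B.gcd id = 1)
    (hP : P = (Finset.range n).image (fun i : ℕ => a + (i : ℤ) * d))
    (hAB : A * B = P.erase 0) :
    (∀ a₁ ∈ A, ∀ a₂ ∈ A, d ∣ a₁ - a₂) ∧ (∀ b₁ ∈ B, ∀ b₂ ∈ B, d ∣ b₁ - b₂) := by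
  have hprog : ∀ x ∈ A * B, d ∣ x - a := fun x hx => by
    rw [hAB] at hx
    exact dvd_sub_of_mem_image_range (hP ▸ mem_of_mem_erase hx)
  have hprog' : ∀ x ∈ B * A, d ∣ x - a := by rwa [mul_comm B A]
  exact ⟨fun a₁ h₁ a₂ h₂ => dvd_sub_of_forall_mem_mul_dvd_sub hBgcd hprog h₁ h₂,
    fun b₁ h₁ b₂ h₂ => dvd_sub_of_forall_mem_mul_dvd_sub hAgcd hprog' h₁ h₂⟩

/-- If A, B are sets of coprime integers with A·B an arithmetic progression
minus zero, then the difference of the progression divides all differences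
of elements of A, and of B. -/
theorem diff_divides_of_primitive_decomposition
    (A B P : Finset ℤ) (a d : ℤ) (n : ℕ)
    (hAgcd : A.gcd id = 1) (hBgcd : B.gcd id = 1)
    (hA : 2 ≤ A.card) (hB : 2 ≤ B.card)
    (hP : P = (Finset.range n).image (fun i : ℕ => a + (i : ℤ) * d))
    (hAB : A * B = P.erase 0) :
    (∀ a₁ ∈ A, ∀ a₂ ∈ A, d ∣ a₁ - a₂) ∧ (∀ b₁ ∈ B, ∀ b₂ ∈ B, d ∣ b₁ - b₂) :=
  diff_divides_of_primitive_decomposition_general A B P a d n hAgcd hBgcd hP hAB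
end

section
/- If A = B = {(1-d)/2, (1+d)/2} ⊆ ℚ with integer d ≥ 3, and the product set A·B (possibly with 0 adjoined) forms an arithmetic progression in ℚ, then d = 3 and A = B = {-1, 2}. -/
open Finset Pointwise

/-!
With `u = (1 - d) / 2` and `v = (1 + d) / 2` we have `A * B = {u v, u², v²}` and
`u v < 0 < u² < v²`. In a finite arithmetic progression `a, a + e, …, a + (n - 1) e` with `n`
distinct terms, two distinct terms differ by at least `|e|` while the whole span is at most
`(n - 1) |e|`, so consecutive terms differ by exactly `|e|`. Hence if `A * B` is a progression
then `u² - u v = v² - u²`, i.e. `d (d - 3) = 0`; and if `{0} ∪ A * B` is one then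
`u² = v² - u²`, i.e. `(d - 3)² = 8`, which has no integer solution.
-/

section Progression

variable {K : Type*} [Field K] [LinearOrder K] {a e x y : K} {n : ℕ}

lemma exists_sub_eq_mul_of_mem_image_range
    (hx : x ∈ (range n).image (fun i : ℕ => a + i * e))
    (hy : y ∈ (range n).image (fun i : ℕ => a + i * e)) :
    ∃ i j : ℕ, i < n ∧ j < n ∧ y - x = ((j : K) - i) * e := by
  simp only [mem_image, mem_range] at hx hy
  obtain ⟨i, hi, rfl⟩ := hx
  obtain ⟨j, hj, rfl⟩ := hy
  exact ⟨i, j, hi, hj, by ring⟩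

variable [IsStrictOrderedRing K]

lemma abs_le_sub_of_mem_image_range
    (hx : x ∈ (range n).image (fun i : ℕ => a + i * e))
    (hy : y ∈ (range n).image (fun i : ℕ => a + i * e)) (hxy : x < y) :
    |e| ≤ y - x := by
  obtain ⟨i, j, -, -, hji⟩ := exists_sub_eq_mul_of_mem_image_range hx hy
  have hij : i ≠ j := by rintro rfl; simp [sub_eq_zero] at hji; linarith
  have hone : (1 : K) ≤ |(j : K) - i| := by
    have : (1 : ℤ) ≤ |(j : ℤ) - i| := Int.one_le_abs (by omega)
    exact_mod_cast this
  calc |e| = 1 * |e| := (one_mul _).symm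
    _ ≤ |(j : K) - i| * |e| := by gcongr
    _ = y - x := by rw [← abs_mul, ← hji, abs_of_pos (sub_pos.mpr hxy)]

lemma sub_le_mul_abs_of_mem_image_range
    (hx : x ∈ (range n).image (fun i : ℕ => a + i * e))
    (hy : y ∈ (range n).image (fun i : ℕ => a + i * e)) :
    y - x ≤ ((n : K) - 1) * |e| := by
  obtain ⟨i, j, hi, hj, hji⟩ := exists_sub_eq_mul_of_mem_image_range hx hy
  have hle : |(j : K) - i| ≤ (n : K) - 1 := by
    rw [abs_le]; constructor
    · have : (i : K) + 1 ≤ n := by exact_mod_cast hi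
      linarith [(Nat.cast_nonneg j : (0 : K) ≤ j)]
    · have : (j : K) + 1 ≤ n := by exact_mod_cast hj
      linarith [(Nat.cast_nonneg i : (0 : K) ≤ i)]
  calc y - x ≤ |y - x| := le_abs_self _
    _ = |(j : K) - i| * |e| := by rw [hji, abs_mul]
    _ ≤ ((n : K) - 1) * |e| := by gcongr

lemma card_image_range_of_ne_zero (he : e ≠ 0) :
    ((range n).image (fun i : ℕ => a + i * e)).card = n := by
  refine (card_image_of_injective _ fun i j hij => ?_).trans (card_range n)
  simpa [he] using hij

lemma ne_zero_of_mem_image_range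
    (hx : x ∈ (range n).image (fun i : ℕ => a + i * e))
    (hy : y ∈ (range n).image (fun i : ℕ => a + i * e)) (hxy : x < y) : e ≠ 0 := by
  rintro rfl
  obtain ⟨i, j, -, -, hji⟩ := exists_sub_eq_mul_of_mem_image_range hx hy
  linarith [mul_zero ((j : K) - i)]

lemma sub_eq_sub_of_eq_image_range_three {p q r : K}
    (h : ({p, q, r} : Finset K) = (range n).image (fun i : ℕ => a + i * e))
    (hpq : p < q) (hqr : q < r) : q - p = r - q := by
  have mem : ∀ t ∈ ({p, q, r} : Finset K), t ∈ (range n).image (fun i : ℕ => a + i * e) :=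
    fun t ht => h ▸ ht
  have hp := mem p (by simp)
  have hq := mem q (by simp)
  have hr := mem r (by simp)
  have hn : n = 3 := by
    rw [← card_image_range_of_ne_zero (a := a) (n := n)
      (ne_zero_of_mem_image_range hp hq hpq), ← h]
    exact card_eq_three.mpr ⟨p, q, r, hpq.ne, (hpq.trans hqr).ne, hqr.ne, rfl⟩
  subst hn
  have := sub_le_mul_abs_of_mem_image_range hp hr
  norm_num at this
  linarith [abs_le_sub_of_mem_image_range hp hq hpq, abs_le_sub_of_mem_image_range hq hr hqr]

lemma sub_eq_sub_of_eq_image_range_four {p q r s : K}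
    (h : ({p, q, r, s} : Finset K) = (range n).image (fun i : ℕ => a + i * e))
    (hpq : p < q) (hqr : q < r) (hrs : r < s) : r - q = s - r := by
  have mem : ∀ t ∈ ({p, q, r, s} : Finset K),
      t ∈ (range n).image (fun i : ℕ => a + i * e) :=
    fun t ht => h ▸ ht
  have hp := mem p (by simp)
  have hq := mem q (by simp)
  have hr := mem r (by simp)
  have hs := mem s (by simp)
  have hn : n = 4 := by
    rw [← card_image_range_of_ne_zero (a := a) (n := n)
      (ne_zero_of_mem_image_range hp hq hpq), ← h]
    exact card_eq_four.mpr ⟨p, q, r, s, hpq.ne, (hpq.trans hqr).ne,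
      (hpq.trans (hqr.trans hrs)).ne, hqr.ne, (hqr.trans hrs).ne, hrs.ne, rfl⟩
  subst hn
  have := sub_le_mul_abs_of_mem_image_range hp hs
  norm_num at this
  linarith [abs_le_sub_of_mem_image_range hp hq hpq, abs_le_sub_of_mem_image_range hq hr hqr,
    abs_le_sub_of_mem_image_range hr hs hrs]

end Progression

lemma pair_mul_pair_self {M : Type*} [CommMonoid M] [DecidableEq M] (u v : M) :
    ({u, v} : Finset M) * {u, v} = {u * v, u * u, v * v} := by
  ext t
  simp only [mem_mul, mem_insert, mem_singleton]
  constructor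
  · rintro ⟨x, (rfl | rfl), y, (rfl | rfl), rfl⟩ <;> simp [mul_comm]
  · rintro (rfl | rfl | rfl)
    exacts [⟨u, .inl rfl, v, .inr rfl, rfl⟩, ⟨u, .inl rfl, u, .inl rfl, rfl⟩,
      ⟨v, .inr rfl, v, .inr rfl, rfl⟩]

lemma sq_sub_six_mul_add_one_ne_zero (d : ℤ) : d ^ 2 - 6 * d + 1 ≠ 0 := by
  intro h
  -- `(d - 3)² = 8` lies strictly between `2²` and `3²`.
  rcases le_or_gt |d - 3| 2 with h2 | h3
  · nlinarith [abs_mul_abs_self (d - 3), abs_nonneg (d - 3)]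
  · nlinarith [abs_mul_abs_self (d - 3)]

/-- If A = B = {(1-d)/2, (1+d)/2} with d ≥ 3 an integer and A·B (possibly
with 0 adjoined) is an arithmetic progression in ℚ, then d = 3 and
A = B = {-1, 2}. -/
theorem progression_product_d_eq_three
    (d : ℤ) (hd : 3 ≤ d)
    (A B : Finset ℚ)
    (hA : A = ({((1 : ℚ) - d) / 2, ((1 : ℚ) + d) / 2} : Finset ℚ))
    (hB : B = ({((1 : ℚ) - d) / 2, ((1 : ℚ) + d) / 2} : Finset ℚ))
    (hAP : (∃ (a e : ℚ) (n : ℕ),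
              A * B = (Finset.range n).image (fun i : ℕ => a + (i : ℚ) * e)) ∨
           (∃ (a e : ℚ) (n : ℕ),
              insert (0 : ℚ) (A * B) =
                (Finset.range n).image (fun i : ℕ => a + (i : ℚ) * e))) :
    d = 3 ∧ A = ({-1, 2} : Finset ℚ) ∧ B = ({-1, 2} : Finset ℚ) := by
  have hD : (3 : ℚ) ≤ d := by exact_mod_cast hd
  obtain ⟨u, hu⟩ : ∃ u : ℚ, u = (1 - d) / 2 := ⟨_, rfl⟩
  obtain ⟨v, hv⟩ : ∃ v : ℚ, v = (1 + d) / 2 := ⟨_, rfl⟩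
  have hAB : A * B = {u * v, u * u, v * v} := by rw [hA, hB, ← hu, ← hv, pair_mul_pair_self]
  have huv : u * v < 0 := by rw [hu, hv]; nlinarith
  have huu : 0 < u * u := by rw [hu]; nlinarith
  have hvv : u * u < v * v := by rw [hu, hv]; nlinarith
  have hd3 : d = 3 := by
    rcases hAP with ⟨a, e, n, h⟩ | ⟨a, e, n, h⟩
    · have key := sub_eq_sub_of_eq_image_range_three (hAB ▸ h) (huv.trans huu) hvv
      have : ((d : ℚ) - 3) * d = 0 := by rw [hu, hv] at key; linear_combination 2 * key
      exact_mod_cast sub_eq_zero.mp ((mul_eq_zero.mp this).resolve_right (by positivity))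
    · rw [hAB, insert_comm] at h
      have key := sub_eq_sub_of_eq_image_range_four h huv huu hvv
      have : ((d ^ 2 - 6 * d + 1 : ℤ) : ℚ) = 0 := by
        rw [hu, hv] at key; push_cast; linear_combination 4 * key
      exact absurd (by exact_mod_cast this) (sq_sub_six_mul_add_one_ne_zero d)
  subst hd3
  norm_num [hA, hB]
end

section
/- Let p be prime and let X ⊆ 𝔽_p and m a positive integer such that |mX| < min(33·m·|X|, (p-1)/8), where mX denotes the m-fold sumset of X. If mX is contained in an arithmetic progression (in 𝔽_p) of at most 2|mX| terms, then X is contained in an arithmetic progression of at most 132|X| terms. -/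
open Finset Pointwise

/-!
Fix `x₀ ∈ X` and write `mX ⊆ {a + i d : 0 ≤ i < n}`. For `u ∈ X` the elements
`(m - j) x₀ + j u` (`0 ≤ j ≤ m`) lie in `mX`, so every multiple `j (u - x₀)` with `j ≤ m` is
`f_j d` for an integer `|f_j| < n`. Writing `u - x₀ = c d`, the integers `j c` and `f_j` agree
modulo `p`; as long as `j |c| < n` we have `|(j + 1) c| + |f_{j+1}| < 3 n ≤ p`, so
`(j + 1) c = f_{j+1}` exactly. Inductively `m |c| < n ≤ 2 |mX| < 66 m |X|`, so `|c| < 66 |X|`: all of `X` lies in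
the progression `x₀ + c d`, `|c| < 66 |X|`.
-/

/-- The m-fold iterated sumset of a finite set (with `iterSumset 0 X = {0}`). -/
def iterSumset {α : Type*} [AddCommMonoid α] [DecidableEq α] :
    ℕ → Finset α → Finset α
  | 0, _ => {0}
  | n + 1, X => iterSumset n X + X

def progression {R : Type*} [Semiring R] [DecidableEq R] (a d : R) (n : ℕ) : Finset R :=
  (range n).image fun i : ℕ => a + (i : R) * d

section progression

variable {R : Type*} [CommRing R] [DecidableEq R]

lemma exists_sub_eq_intCast_mul_of_mem_progression {a d z₁ z₂ : R} {n : ℕ}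
    (h₁ : z₁ ∈ progression a d n) (h₂ : z₂ ∈ progression a d n) :
    ∃ c : ℤ, c.natAbs < n ∧ z₁ - z₂ = c * d := by
  obtain ⟨i₁, hi₁, rfl⟩ := mem_image.mp h₁
  obtain ⟨i₂, hi₂, rfl⟩ := mem_image.mp h₂
  rw [mem_range] at hi₁ hi₂
  exact ⟨(i₁ : ℤ) - i₂, by omega, by push_cast; ring⟩

lemma subset_progression_of_forall_eq_add_intCast_mul {X : Finset R} {x₀ d : R} {r : ℕ}
    (h : ∀ u ∈ X, ∃ c : ℤ, c.natAbs < r ∧ u = x₀ + c * d) :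
    X ⊆ progression (x₀ - (r : R) * d) d (2 * r) := by
  intro u hu
  obtain ⟨c, hc, rfl⟩ := h u hu
  refine mem_image.mpr ⟨(c + r).toNat, mem_range.mpr (by omega), ?_⟩
  have hcast : (((c + r).toNat : ℕ) : R) = ((c + r : ℤ) : R) := by
    exact_mod_cast congrArg (Int.cast (R := R)) (Int.toNat_of_nonneg (show 0 ≤ c + r by omega))
  rw [hcast]
  push_cast
  ring

end progression

lemma nsmul_mem_iterSumset {α : Type*} [AddCommMonoid α] [DecidableEq α] {X : Finset α} {u : α}
    (hu : u ∈ X) (i : ℕ) : i • u ∈ iterSumset i X := by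
  induction i with
  | zero => simp [iterSumset]
  | succ i ih => rw [succ_nsmul]; exact add_mem_add ih hu

lemma nsmul_add_nsmul_mem_iterSumset {α : Type*} [AddCommMonoid α] [DecidableEq α]
    {X : Finset α} {u v : α} (hu : u ∈ X) (hv : v ∈ X) (i j : ℕ) :
    i • u + j • v ∈ iterSumset (i + j) X := by
  induction j with
  | zero => simpa using nsmul_mem_iterSumset hu i
  | succ j ih =>
    have := add_mem_add ih hv
    rwa [add_assoc, ← succ_nsmul] at this

lemma ZMod.eq_of_intCast_eq_of_natAbs_add_lt {p : ℕ} {c₁ c₂ : ℤ}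
    (h : (c₁ : ZMod p) = c₂) (hlt : c₁.natAbs + c₂.natAbs < p) : c₁ = c₂ := by
  have hdvd : (p : ℤ) ∣ c₂ - c₁ := (ZMod.intCast_eq_intCast_iff_dvd_sub _ _ _).mp h
  have : c₂ - c₁ = 0 := Int.eq_zero_of_abs_lt_dvd hdvd (by rw [Int.abs_eq_natAbs]; omega)
  omega

lemma ZMod.exists_eq_intCast_mul_of_forall_nsmul {p : ℕ} [Fact p.Prime] {w d : ZMod p}
    {m n : ℕ} (hm : 1 ≤ m) (hp : 3 * n ≤ p)
    (h : ∀ j ≤ m, ∃ f : ℤ, f.natAbs < n ∧ (j : ZMod p) * w = f * d) :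
    ∃ c : ℤ, m * c.natAbs < n ∧ w = c * d := by
  obtain ⟨c, hcn, hc⟩ := h 1 hm
  rw [Nat.cast_one, one_mul] at hc
  rcases eq_or_ne d 0 with rfl | hd
  · exact ⟨0, by simp; omega, by simpa using hc⟩
  refine ⟨c, ?_, hc⟩
  suffices ∀ j ≤ m, j * c.natAbs < n from this m le_rfl
  intro j
  induction j with
  | zero => intro; omega
  | succ j ih =>
    intro hj
    obtain ⟨f, hfn, hf⟩ := h (j + 1) hj
    have hcast : ((((j + 1 : ℕ) : ℤ) * c : ℤ) : ZMod p) = f :=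
      mul_right_cancel₀ hd (by rw [← hf, hc]; push_cast; ring)
    have hnatAbs : (((j + 1 : ℕ) : ℤ) * c).natAbs = j * c.natAbs + c.natAbs := by
      rw [Int.natAbs_mul, Int.natAbs_natCast]; ring
    have := ZMod.eq_of_intCast_eq_of_natAbs_add_lt hcast (by have := ih (by omega); omega)
    rw [← this, hnatAbs] at hfn
    linarith

theorem contained_in_short_progression_general
    (p : ℕ) [Fact p.Prime] (X : Finset (ZMod p)) (m : ℕ)
    (hcard₁ : (iterSumset m X).card < 33 * m * X.card)
    (hcard₂ : 8 * (iterSumset m X).card < p - 1)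
    (hAP : ∃ (a d : ZMod p) (n : ℕ), n ≤ 2 * (iterSumset m X).card ∧
      iterSumset m X ⊆ (Finset.range n).image (fun i : ℕ => a + (i : ZMod p) * d)) :
    ∃ a d : ZMod p,
      X ⊆ (Finset.range (132 * X.card)).image (fun i : ℕ => a + (i : ZMod p) * d) := by
  obtain ⟨a, d, n, hn, hsub⟩ := hAP
  rcases X.eq_empty_or_nonempty with rfl | ⟨x₀, hx₀⟩
  · exact ⟨0, 0, by simp⟩
  have hm : 1 ≤ m := Nat.one_le_iff_ne_zero.mpr (by rintro rfl; simp at hcard₁)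
  rw [show 132 * X.card = 2 * (66 * X.card) by ring]
  refine ⟨_, d, subset_progression_of_forall_eq_add_intCast_mul (x₀ := x₀) fun u hu => ?_⟩
  have hmem (j : ℕ) (hj : j ≤ m) : (m - j) • x₀ + j • u ∈ progression a d n := by
    have := nsmul_add_nsmul_mem_iterSumset hx₀ hu (m - j) j
    rw [Nat.sub_add_cancel hj] at this
    exact hsub this
  obtain ⟨c, hcn, hc⟩ :=
    ZMod.exists_eq_intCast_mul_of_forall_nsmul (w := u - x₀) (n := n) hm (by omega) fun j hj => by
      obtain ⟨f, hfn, hf⟩ :=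
        exists_sub_eq_intCast_mul_of_mem_progression (hmem j hj) (hmem 0 (Nat.zero_le m))
      refine ⟨f, hfn, ?_⟩
      rw [← hf]
      simp only [nsmul_eq_mul, Nat.cast_sub hj, Nat.sub_zero]
      ring
  refine ⟨c, Nat.lt_of_mul_lt_mul_left (a := m) (by linarith), by rw [← hc]; ring⟩

/-- If |mX| < min(33 m |X|, (p-1)/8) and mX is contained in an arithmetic
progression of at most 2|mX| terms, then X is contained in an arithmetic
progression of at most 132|X| terms. -/
theorem contained_in_short_progression
    (p : ℕ) [Fact p.Prime] (X : Finset (ZMod p)) (m : ℕ) (hm : 1 ≤ m)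
    (hcard₁ : (iterSumset m X).card < 33 * m * X.card)
    (hcard₂ : 8 * (iterSumset m X).card < p - 1)
    (hAP : ∃ (a d : ZMod p) (n : ℕ), n ≤ 2 * (iterSumset m X).card ∧
      iterSumset m X ⊆ (Finset.range n).image (fun i : ℕ => a + (i : ZMod p) * d)) :
    ∃ a d : ZMod p,
      X ⊆ (Finset.range (132 * X.card)).image (fun i : ℕ => a + (i : ZMod p) * d) :=
  contained_in_short_progression_general p X m hcard₁ hcard₂ hAP
end

section
/- Let 0 < δ < 1 and let L be an integer with L > δ⁻¹. Let X ⊆ {r+1, r+2, ..., r+L} be a set of integers with |X| ≥ δL. Then for any positive integer k with δ⁻ᵏ < L there exist x₁, x₂ ∈ X with δ^{-(k-1)}/2 ≤ x₁ - x₂ < 2δ⁻ᵏ. -/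
/-!
Let `B = 2δ⁻ᵏ < 2L` and let `m = ⌈L / B⌉`, so that `L ≤ m B < 2L`. With
`s = ⌈δ⁻⁽ᵏ⁻¹⁾/2⌉ ≤ δ⁻⁽ᵏ⁻¹⁾ = δB/2` this gives `m s < δL ≤ |X|`. Cutting the interval into `m`
blocks of `⌈B⌉` consecutive integers, some block holds more than `s` points of `X` by pigeonhole;
its largest and smallest points differ by at least `s` and by less than `B`.
-/

open Finset

theorem Int.sub_lt_of_ediv_eq {x y b : ℤ} (hb : 0 < b) (h : x / b = y / b) : x - y < b := by
  have hx := Int.mul_ediv_add_emod x b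
  have hy := Int.mul_ediv_add_emod y b
  have := Int.emod_lt_of_pos x hb
  have := Int.emod_nonneg y hb.ne'
  rw [h] at hx
  omega

theorem Finset.exists_le_sub_of_lt_card {T : Finset ℤ} {s : ℕ} (h : s < #T) :
    ∃ x ∈ T, ∃ y ∈ T, (s : ℤ) ≤ x - y := by
  have hT : T.Nonempty := card_pos.mp (by omega)
  refine ⟨T.max' hT, T.max'_mem hT, T.min' hT, T.min'_mem hT, ?_⟩
  have hsub : T ⊆ Icc (T.min' hT) (T.max' hT) := fun x hx =>
    mem_Icc.mpr ⟨T.min'_le x hx, T.le_max' x hx⟩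
  have := (card_le_card hsub).trans_eq (Int.card_Icc _ _)
  omega

theorem Finset.exists_sub_mem_Ico_of_mul_lt_card {X : Finset ℤ} {a b : ℤ} {m s : ℕ} (hb : 0 < b)
    (hX : X ⊆ Ico a (a + m * b)) (hcard : m * s < #X) :
    ∃ x ∈ X, ∃ y ∈ X, (s : ℤ) ≤ x - y ∧ x - y < b := by
  have hmaps : ∀ x ∈ X, (x - a) / b ∈ Ico (0 : ℤ) m := fun x hx => by
    obtain ⟨hax, hxm⟩ := mem_Ico.mp (hX hx)
    exact mem_Ico.mpr ⟨Int.ediv_nonneg (by omega) hb.le, Int.ediv_lt_of_lt_mul hb (by omega)⟩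
  obtain ⟨q, -, hq⟩ := exists_lt_card_fiber_of_mul_lt_card_of_maps_to hmaps (by simpa using hcard)
  obtain ⟨x, hx, y, hy, hsxy⟩ := exists_le_sub_of_lt_card hq
  rw [mem_filter] at hx hy
  have := Int.sub_lt_of_ediv_eq hb (hx.2.trans hy.2.symm)
  exact ⟨x, hx.1, y, hy.1, hsxy, by omega⟩

theorem exists_nat_le_mul_lt_two_mul {K : Type*} [Field K] [LinearOrder K] [IsStrictOrderedRing K]
    [FloorSemiring K] {L B : K} (hB : 0 < B) (hBL : B < 2 * L) :
    ∃ m : ℕ, L ≤ m * B ∧ m * B < 2 * L := by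
  have hL : 0 < L := by linarith
  refine ⟨⌈L / B⌉₊, (div_le_iff₀ hB).mp (Nat.le_ceil _), ?_⟩
  rcases le_or_gt B L with hle | hlt
  · have := Nat.ceil_lt_add_one (by positivity) (a := L / B)
    calc (⌈L / B⌉₊ : K) * B < (L / B + 1) * B := by gcongr
      _ = L + B := by field_simp
      _ ≤ 2 * L := by linarith
  · have : ⌈L / B⌉₊ = 1 := Nat.ceil_eq_iff one_ne_zero |>.mpr ⟨by simpa using div_pos hL hB, by
      simpa using (div_le_one hB).mpr hlt.le⟩
    simpa [this] using hBL

theorem close_pair_in_dense_set_general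
    (δ : ℚ) (hδ0 : 0 < δ) (hδ1 : δ < 1)
    (r L : ℤ)
    (X : Finset ℤ) (hX : X ⊆ Finset.Icc (r + 1) (r + L))
    (hcard : δ * (L : ℚ) ≤ (X.card : ℚ))
    (k : ℕ) (hk : 1 ≤ k) (hkL : δ⁻¹ ^ k < (L : ℚ)) :
    ∃ x₁ ∈ X, ∃ x₂ ∈ X,
      δ⁻¹ ^ (k - 1) / 2 ≤ ((x₁ - x₂ : ℤ) : ℚ) ∧
      ((x₁ - x₂ : ℤ) : ℚ) < 2 * δ⁻¹ ^ k := by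
  have hδinv : 1 ≤ δ⁻¹ := (one_le_inv₀ hδ0).mpr hδ1.le
  have hpow : δ * δ⁻¹ ^ k = δ⁻¹ ^ (k - 1) := by
    obtain ⟨j, rfl⟩ := Nat.exists_eq_add_of_le' hk
    simp [pow_succ', hδ0.ne']
  obtain ⟨m, hLm, hm⟩ := exists_nat_le_mul_lt_two_mul (L := (L : ℚ)) (B := 2 * δ⁻¹ ^ k)
    (by positivity) (by linarith)
  set s := ⌈δ⁻¹ ^ (k - 1) / 2⌉₊
  set b := ⌈2 * δ⁻¹ ^ k⌉
  have hs : (s : ℚ) ≤ δ⁻¹ ^ (k - 1) := by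
    have := one_le_pow₀ hδinv (n := k - 1)
    exact (Nat.ceil_le_two_mul (by linarith)).trans_eq (by ring)
  have hmb : L ≤ m * b := by
    have : (L : ℚ) ≤ m * b := hLm.trans (by gcongr; exact Int.le_ceil _)
    exact_mod_cast this
  have hms : m * s < #X := by
    have : (m * s : ℚ) < #X :=
      calc (m : ℚ) * s ≤ m * δ⁻¹ ^ (k - 1) := by gcongr
        _ = δ * (m * (2 * δ⁻¹ ^ k)) / 2 := by rw [← hpow]; ring
        _ < δ * (2 * L) / 2 := by gcongr
        _ = δ * L := by ring
        _ ≤ #X := hcard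
    exact_mod_cast this
  have hXm : X ⊆ Ico (r + 1) (r + 1 + m * b) := fun z hz => by
    have := mem_Icc.mp (hX hz)
    exact mem_Ico.mpr (by omega)
  obtain ⟨x, hx, y, hy, hsxy, hxyb⟩ :=
    exists_sub_mem_Ico_of_mul_lt_card (Int.ceil_pos.mpr (by positivity)) hXm hms
  refine ⟨x, hx, y, hy, ?_, Int.lt_ceil.mp hxyb⟩
  calc δ⁻¹ ^ (k - 1) / 2 ≤ s := Nat.le_ceil _
    _ ≤ ((x - y : ℤ) : ℚ) := by exact_mod_cast hsxy

/-- Pigeonhole lemma: a dense subset of an interval contains two elements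
whose difference lies in a prescribed dyadic-type range. -/
theorem close_pair_in_dense_set
    (δ : ℚ) (hδ0 : 0 < δ) (hδ1 : δ < 1)
    (r L : ℤ) (hL : δ⁻¹ < (L : ℚ))
    (X : Finset ℤ) (hX : X ⊆ Finset.Icc (r + 1) (r + L))
    (hcard : δ * (L : ℚ) ≤ (X.card : ℚ))
    (k : ℕ) (hk : 1 ≤ k) (hkL : δ⁻¹ ^ k < (L : ℚ)) :
    ∃ x₁ ∈ X, ∃ x₂ ∈ X,
      δ⁻¹ ^ (k - 1) / 2 ≤ ((x₁ - x₂ : ℤ) : ℚ) ∧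
      ((x₁ - x₂ : ℤ) : ℚ) < 2 * δ⁻¹ ^ k :=
  close_pair_in_dense_set_general δ hδ0 hδ1 r L X hX hcard k hk hkL
end

section
/- Let p be a prime with p ≡ 1 (mod 4) and p ≠ 5. Then for any integer L with (p-1)/2 ≤ L ≤ p-1, the set I = {1, 2, ..., L} (viewed as residues mod p) admits a nontrivial multiplicative decomposition: there exist A, B ⊆ 𝔽_p with |A| ≥ 2, |B| ≥ 2, and I = A·B. -/
/-!
Take `i` with `i ^ 2 = -1` (it exists as `p ≡ 1 mod 4`). Since `L ≥ (p - 1) / 2`, every nonzero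
residue lies in `I` or in `-I`. So for `x ∈ I`, either `i * x ∈ I`, or `-(i * x) ∈ I` and then
`x = i * (-(i * x))`. Hence `I = {1, i} * B` with `B = {x ∈ I | i * x ∈ I}`, and
`|B| ≥ |I| / 2 ≥ 2` because `p ≥ 9` forces `L ≥ 4`.
-/

open Finset Pointwise

theorem Finset.pair_mul_filter_eq_of_mul_self_eq_neg_one {M : Type*} [Monoid M] [HasDistribNeg M]
    [DecidableEq M] {i : M} (hi : i * i = -1) {I : Finset M}
    (hI : ∀ x ∈ I, i * x ∈ I ∨ -(i * x) ∈ I) :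
    ({1, i} : Finset M) * I.filter (fun x => i * x ∈ I) = I := by
  have hinv : ∀ x : M, i * -(i * x) = x := fun x => by
    rw [mul_neg, ← mul_assoc, hi, neg_one_mul, neg_neg]
  apply Subset.antisymm
  · intro _ hx
    obtain ⟨a, ha, b, hb, rfl⟩ := mem_mul.1 hx
    rw [mem_filter] at hb
    rcases mem_insert.1 ha with rfl | ha
    · simpa using hb.1
    · rw [mem_singleton.1 ha]; exact hb.2
  · intro x hx
    rcases hI x hx with hix | hix
    · have hxB : x ∈ I.filter (fun x => i * x ∈ I) := mem_filter.2 ⟨hx, hix⟩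
      simpa using mul_mem_mul (mem_insert_self 1 {i}) hxB
    · have hxB : -(i * x) ∈ I.filter (fun x => i * x ∈ I) :=
        mem_filter.2 ⟨hix, (hinv x).symm ▸ hx⟩
      simpa [hinv] using mul_mem_mul (mem_insert_of_mem (mem_singleton_self i)) hxB

namespace ZMod

variable {p L : ℕ}

theorem mem_image_natCast_Icc_one_iff [NeZero p] (hL : L < p) {x : ZMod p} :
    x ∈ (Icc 1 L).image (fun n : ℕ => (n : ZMod p)) ↔ x ≠ 0 ∧ x.val ≤ L := by
  rw [← val_pos, mem_image]
  constructor
  · rintro ⟨n, hn, rfl⟩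
    rw [mem_Icc] at hn
    rw [val_natCast_of_lt (by omega)]
    omega
  · rintro ⟨h0, hL⟩
    exact ⟨x.val, mem_Icc.2 ⟨h0, hL⟩, natCast_zmod_val x⟩

theorem card_image_natCast_Icc_one (hL : L < p) :
    ((Icc 1 L).image (fun n : ℕ => (n : ZMod p))).card = L := by
  rw [card_image_of_injOn, Nat.card_Icc, Nat.add_sub_cancel]
  exact (CharP.natCast_injOn_Iio (ZMod p) p).mono fun n hn => by
    simp only [coe_Icc, Set.mem_Icc] at hn
    exact Set.mem_Iio.2 (by omega)

theorem mem_or_neg_mem_image_natCast_Icc_one [NeZero p] (hL1 : p - 1 ≤ 2 * L) (hL2 : L < p)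
    {x : ZMod p} (hx : x ≠ 0) :
    x ∈ (Icc 1 L).image (fun n : ℕ => (n : ZMod p)) ∨
      -x ∈ (Icc 1 L).image (fun n : ℕ => (n : ZMod p)) := by
  simp only [mem_image_natCast_Icc_one_iff hL2, ne_eq, neg_eq_zero, hx, not_false_eq_true,
    true_and, neg_val, if_false]
  have := val_lt x
  omega

end ZMod

/-- For p ≡ 1 (mod 4), p ≠ 5, any interval {1,…,L} with
(p-1)/2 ≤ L ≤ p-1 admits a nontrivial multiplicative decomposition. -/
theorem long_interval_decomposition_one_mod_four
    (p : ℕ) [Fact p.Prime] (hp4 : p % 4 = 1) (hp5 : p ≠ 5)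
    (L : ℕ) (hL1 : p - 1 ≤ 2 * L) (hL2 : L ≤ p - 1) :
    ∃ A B : Finset (ZMod p), 2 ≤ A.card ∧ 2 ≤ B.card ∧
      (Finset.Icc 1 L).image (fun i : ℕ => (i : ZMod p)) = A * B := by
  have hp2 := (Fact.out : p.Prime).two_le
  have hLp : L < p := by omega
  set I := (Finset.Icc 1 L).image (fun i : ℕ => (i : ZMod p))
  obtain ⟨i, hi⟩ : IsSquare (-1 : ZMod p) := ZMod.exists_sq_eq_neg_one_iff.2 (by omega)
  have hi0 : i ≠ 0 := by rintro rfl; simp at hi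
  have h1i : (1 : ZMod p) ≠ i := by
    rintro rfl
    have h2 : ((2 : ℕ) : ZMod p) = 0 := by push_cast; linear_combination -hi
    have := Nat.le_of_dvd two_pos ((ZMod.natCast_eq_zero_iff 2 p).1 h2)
    omega
  have hIAB := pair_mul_filter_eq_of_mul_self_eq_neg_one hi.symm fun x hx =>
    ZMod.mem_or_neg_mem_image_natCast_Icc_one hL1 hLp <|
      mul_ne_zero hi0 ((ZMod.mem_image_natCast_Icc_one_iff hLp).1 hx).1
  refine ⟨{1, i}, I.filter (fun x => i * x ∈ I), (card_pair h1i).ge, ?_, hIAB.symm⟩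
  have hcard : L ≤ 2 * (I.filter (fun x => i * x ∈ I)).card := by
    calc L = I.card := (ZMod.card_image_natCast_Icc_one hLp).symm
      _ = ({1, i} * I.filter (fun x => i * x ∈ I)).card := by rw [hIAB]
      _ ≤ _ := card_mul_le.trans (Nat.mul_le_mul_right _ card_le_two)
  omega
end

section
/- Let p ≡ 1 (mod 4) be prime, write p = u² + v² with positive integers u, v, and let h ∈ 𝔽_p satisfy h ≡ u/v (mod p). Let (p-1)/2 ≤ L ≤ p-1 and I = {1, ..., L} mod p. Then for every x ∈ I, at least one of hx or h⁻¹x lies in I. -/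
/-!
Since `p = u² + v²`, `v` is a unit mod `p` and `h = u/v` squares to `-1`, so `h⁻¹ = -h`.
Thus `hx` and `h⁻¹x` are the two nonzero residues `±hx`, and the interval `{1, …, L}` with
`2L ≥ p - 1` contains at least one of every pair `±y` of nonzero residues.
-/

open Finset

theorem Int.not_dvd_of_sq_add_sq_eq_prime {p : ℕ} (hp : p.Prime) {u v : ℤ}
    (huv : (p : ℤ) = u ^ 2 + v ^ 2) : ¬(p : ℤ) ∣ v := by
  intro hpv
  have hpp : Prime (p : ℤ) := Nat.prime_iff_prime_int.mp hp
  have hpu : (p : ℤ) ∣ u := by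
    refine hpp.dvd_of_dvd_pow (n := 2) ?_
    rw [eq_sub_of_add_eq huv.symm]
    exact dvd_sub dvd_rfl (dvd_pow hpv two_ne_zero)
  -- `p² ∣ u² + v² = p` forces `p ∣ 1`.
  have hsq : (p : ℤ) * p ∣ p * 1 := by
    rw [mul_one, ← sq]
    nth_rw 2 [huv]
    exact dvd_add (pow_dvd_pow_of_dvd hpu 2) (pow_dvd_pow_of_dvd hpv 2)
  exact hpp.not_dvd_one ((mul_dvd_mul_iff_left hpp.ne_zero).mp hsq)

theorem sq_mul_inv_eq_neg_one {K : Type*} [Field K] {u v : K} (hv : v ≠ 0)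
    (huv : u ^ 2 + v ^ 2 = 0) : (u * v⁻¹) ^ 2 = -1 := by
  rw [mul_pow, inv_pow, eq_neg_of_add_eq_zero_left huv, neg_mul,
    mul_inv_cancel₀ (pow_ne_zero 2 hv)]

theorem inv_eq_neg_of_sq_eq_neg_one {K : Type*} [DivisionRing K] {h : K} (hh : h ^ 2 = -1) :
    h⁻¹ = -h :=
  inv_eq_of_mul_eq_one_right (by rw [mul_neg, ← sq, hh, neg_neg])

namespace ZMod

theorem mem_image_Icc_of_val {n L : ℕ} [NeZero n] {y : ZMod n} (h1 : 1 ≤ y.val)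
    (hL : y.val ≤ L) :
    y ∈ (Icc 1 L).image (fun i : ℕ => (i : ZMod n)) :=
  mem_image.2 ⟨y.val, mem_Icc.2 ⟨h1, hL⟩, natCast_zmod_val y⟩

theorem ne_zero_of_mem_image_Icc {n L : ℕ} (hL : L < n) {x : ZMod n}
    (hx : x ∈ (Icc 1 L).image (fun i : ℕ => (i : ZMod n))) : x ≠ 0 := by
  obtain ⟨i, hi, rfl⟩ := mem_image.1 hx
  rw [mem_Icc] at hi
  rw [Ne, natCast_eq_zero_iff]
  exact fun hdvd => absurd (Nat.le_of_dvd (by omega) hdvd) (by omega)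

theorem mem_or_neg_mem_image_Icc {n L : ℕ} [NeZero n] (hL : n - 1 ≤ 2 * L) {y : ZMod n}
    (hy : y ≠ 0) :
    y ∈ (Icc 1 L).image (fun i : ℕ => (i : ZMod n)) ∨
      -y ∈ (Icc 1 L).image (fun i : ℕ => (i : ZMod n)) := by
  have hlt := val_lt y
  have hpos : 0 < y.val := (val_pos).2 hy
  by_cases hyL : y.val ≤ L
  · exact Or.inl (mem_image_Icc_of_val hpos hyL)
  · have hneg : (-y).val = n - y.val := by rw [neg_val, if_neg hy]
    exact Or.inr (mem_image_Icc_of_val (by omega) (by omega))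

end ZMod

theorem rotation_keeps_interval_general
    (p : ℕ) [Fact p.Prime]
    (u v : ℤ) (huv : (p : ℤ) = u ^ 2 + v ^ 2)
    (h : ZMod p) (hh : h = (u : ZMod p) * (v : ZMod p)⁻¹)
    (L : ℕ) (hL1 : p - 1 ≤ 2 * L) (hL2 : L ≤ p - 1)
    (I : Finset (ZMod p))
    (hI : I = (Finset.Icc 1 L).image (fun i : ℕ => (i : ZMod p))) :
    ∀ x ∈ I, h * x ∈ I ∨ h⁻¹ * x ∈ I := by
  have hp : p.Prime := Fact.out
  have hv : (v : ZMod p) ≠ 0 := by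
    rw [Ne, ZMod.intCast_zmod_eq_zero_iff_dvd]
    exact Int.not_dvd_of_sq_add_sq_eq_prime hp huv
  have huv' : (u : ZMod p) ^ 2 + (v : ZMod p) ^ 2 = 0 := by
    simpa using (congrArg (fun z : ℤ => (z : ZMod p)) huv).symm
  have hsq : h ^ 2 = -1 := hh ▸ sq_mul_inv_eq_neg_one hv huv'
  have hne : h ≠ 0 := by rintro rfl; simp at hsq
  intro x hx
  subst hI
  have hx0 := ZMod.ne_zero_of_mem_image_Icc (by have := hp.pos; omega) hx
  rw [inv_eq_neg_of_sq_eq_neg_one hsq, neg_mul]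
  exact ZMod.mem_or_neg_mem_image_Icc hL1 (mul_ne_zero hne hx0)

/-- With p = u² + v², h = u/v in 𝔽_p, and I = {1,…,L} mod p with
(p-1)/2 ≤ L ≤ p-1, every x ∈ I has hx ∈ I or h⁻¹x ∈ I. -/
theorem rotation_keeps_interval
    (p : ℕ) [Fact p.Prime] (hp4 : p % 4 = 1)
    (u v : ℤ) (hu : 0 < u) (hv : 0 < v) (huv : (p : ℤ) = u ^ 2 + v ^ 2)
    (h : ZMod p) (hh : h = (u : ZMod p) * (v : ZMod p)⁻¹)
    (L : ℕ) (hL1 : p - 1 ≤ 2 * L) (hL2 : L ≤ p - 1)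
    (I : Finset (ZMod p))
    (hI : I = (Finset.Icc 1 L).image (fun i : ℕ => (i : ZMod p))) :
    ∀ x ∈ I, h * x ∈ I ∨ h⁻¹ * x ∈ I :=
  rotation_keeps_interval_general p u v huv h hh L hL1 hL2 I hI
end

section
/- Let p ≡ 1 (mod 4) be prime and h ∈ 𝔽_p with h² = -1. Let L be an integer with (p-1)/2 ≤ L ≤ p-1 and I = {1, ..., L} mod p. Then it cannot happen for any x ∈ I that both hx ∉ I and h⁻¹x ∉ I; equivalently, if hx ≡ -s₁ and h⁻¹x ≡ -s₂ (mod p) with 1 ≤ s₁, s₂ ≤ p-L-1, then s₁ + s₂ ≡ 0 (mod p), which is impossible. -/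
/-! Since `h⁻¹ = -h`, a double escape would put neither `h x` nor `-(h x)` in `I`. But of any
nonzero residue `y` and its negative, one has least representative at most `(p - 1) / 2 ≤ L`, so
`h x = 0`, i.e. `x = 0`, and then `h x = x ∈ I`. -/

open Finset

theorem ZMod.mem_or_neg_mem_image_Icc_s9 {p : ℕ} [NeZero p] {L : ℕ} (hL : p - 1 ≤ 2 * L)
    {y : ZMod p} (hy : y ≠ 0) :
    y ∈ (Icc 1 L).image (fun i : ℕ => (i : ZMod p)) ∨
      -y ∈ (Icc 1 L).image (fun i : ℕ => (i : ZMod p)) := by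
  have hpos : 0 < y.val := ZMod.val_pos.2 hy
  have hlt : y.val < p := ZMod.val_lt y
  by_cases hyL : y.val ≤ L
  · exact Or.inl (mem_image.2 ⟨y.val, mem_Icc.2 ⟨hpos, hyL⟩, ZMod.natCast_zmod_val y⟩)
  · have : NeZero y := ⟨hy⟩
    have hneg : (-y).val = p - y.val := ZMod.val_neg_of_ne_zero y
    exact Or.inr (mem_image.2
      ⟨(-y).val, mem_Icc.2 ⟨by omega, by omega⟩, ZMod.natCast_zmod_val (-y)⟩)

theorem no_double_escape_general
    (p : ℕ) [Fact p.Prime]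
    (h : ZMod p) (hh : h ^ 2 = -1)
    (L : ℕ) (hL1 : p - 1 ≤ 2 * L)
    (I : Finset (ZMod p))
    (hI : I = (Finset.Icc 1 L).image (fun i : ℕ => (i : ZMod p))) :
    ∀ x ∈ I, ¬(h * x ∉ I ∧ h⁻¹ * x ∉ I) := by
  subst hI
  rintro x hx ⟨hhx, hhix⟩
  rw [inv_eq_neg_of_sq_eq_neg_one hh, neg_mul] at hhix
  have hhx0 : h * x = 0 := by
    by_contra hne
    exact (ZMod.mem_or_neg_mem_image_Icc_s9 hL1 hne).elim hhx hhix
  have hh0 : h ≠ 0 := by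
    rintro rfl
    simp at hh
  have hx0 : x = 0 := (mul_eq_zero.1 hhx0).resolve_left hh0
  exact hhx (by rwa [hhx0, ← hx0])

/-- If h² = -1 in 𝔽_p and I = {1,…,L} with (p-1)/2 ≤ L ≤ p-1, then it cannot
happen that both hx ∉ I and h⁻¹x ∉ I for some x ∈ I. -/
theorem no_double_escape
    (p : ℕ) [Fact p.Prime] (hp4 : p % 4 = 1)
    (h : ZMod p) (hh : h ^ 2 = -1)
    (L : ℕ) (hL1 : p - 1 ≤ 2 * L) (hL2 : L ≤ p - 1)
    (I : Finset (ZMod p))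
    (hI : I = (Finset.Icc 1 L).image (fun i : ℕ => (i : ZMod p))) :
    ∀ x ∈ I, ¬(h * x ∉ I ∧ h⁻¹ * x ∉ I) :=
  no_double_escape_general p h hh L hL1 I hI
end

section
/- Let p ≥ 3 be a prime and k₁, k₂ integers with k₁ ≥ 0.4(p-1), k₂ ≥ 0.4(p-1). Then the set I = {n mod p : -k₁ ≤ n ≤ k₂} admits a nontrivial multiplicative decomposition: there exist A, B ⊆ 𝔽_p with |A| ≥ 2, |B| ≥ 2, and I \ {0} = A·B. -/
/-!
Take `A = {1, 2}` and let `B` be the set of nonzero `x ∈ I` with `2 * x ∈ I`. A nonzero `x ∈ I`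
lies in `B` unless `2 * x ∉ I`, and then `x = 2 * (x / 2)` with `x / 2 ∈ B`, because `x / 2` and
`2 * x = 4 * (x / 2)` cannot both fall into the gap `{k₂ + 1, …, p - 1 - k₁}`: for `z` and `4 * z`
in the gap, the integer `4 * z.val - (4 * z).val` is a multiple of `p` strictly between `p` and
`2 * p` as soon as `k₁, k₂ ≥ 2 (p - 1) / 5`.
-/

open Finset Pointwise

lemma erase_zero_eq_pair_mul_filter {G₀ : Type*} [GroupWithZero G₀] [DecidableEq G₀]
    {S : Finset G₀} {c : G₀} (hc : c ≠ 0) (h : ∀ x ∈ S, x ≠ 0 → c * x ∈ S ∨ c⁻¹ * x ∈ S) :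
    S.erase 0 = {1, c} * (S.erase 0).filter (fun x => c * x ∈ S) := by
  ext x
  simp only [mem_mul, mem_insert, mem_singleton, mem_filter, mem_erase]
  constructor
  · rintro ⟨hx0, hxS⟩
    rcases h x hxS hx0 with hcx | hcx
    · exact ⟨1, .inl rfl, x, ⟨⟨hx0, hxS⟩, hcx⟩, one_mul x⟩
    · refine ⟨c, .inr rfl, c⁻¹ * x, ⟨⟨?_, hcx⟩, ?_⟩, mul_inv_cancel_left₀ hc x⟩
      · exact mul_ne_zero (inv_ne_zero hc) hx0
      · rwa [mul_inv_cancel_left₀ hc]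
  · rintro ⟨a, rfl | rfl, b, ⟨⟨hb0, hbS⟩, hcb⟩, rfl⟩
    · rw [one_mul]
      exact ⟨hb0, hbS⟩
    · exact ⟨mul_ne_zero hc hb0, hcb⟩

noncomputable def intervalMod (p : ℕ) (k₁ k₂ : ℤ) : Finset (ZMod p) :=
  (Icc (-k₁) k₂).image (fun n : ℤ => (n : ZMod p))

section intervalMod

variable {p : ℕ} {k₁ k₂ : ℤ}

lemma intCast_mem_intervalMod (n m : ℤ) (hlo : -k₁ ≤ n - m * p) (hhi : n - m * p ≤ k₂) :
    (n : ZMod p) ∈ intervalMod p k₁ k₂ :=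
  mem_image.2 ⟨n - m * p, mem_Icc.2 ⟨hlo, hhi⟩, by simp⟩

lemma val_mem_gap_of_notMem [NeZero p] (hk₁ : 0 ≤ k₁) (hk₂ : 0 ≤ k₂) {x : ZMod p}
    (hx : x ∉ intervalMod p k₁ k₂) : k₂ < x.val ∧ x.val + k₁ < p := by
  have hv : (x.val : ℤ) < p := by exact_mod_cast x.val_lt
  have hxv : ((x.val : ℤ) : ZMod p) = x := by simp
  rw [← hxv] at hx
  constructor
  · by_contra! h
    exact hx (intCast_mem_intervalMod _ 0 (by omega) (by omega))
  · by_contra! h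
    exact hx (intCast_mem_intervalMod _ 1 (by omega) (by omega))

lemma mem_or_four_mul_mem [NeZero p] (h₁ : 2 * ((p : ℤ) - 1) ≤ 5 * k₁)
    (h₂ : 2 * ((p : ℤ) - 1) ≤ 5 * k₂) (z : ZMod p) :
    z ∈ intervalMod p k₁ k₂ ∨ 4 * z ∈ intervalMod p k₁ k₂ := by
  by_contra! h
  have hp : 0 < p := NeZero.pos p
  obtain ⟨hz₁, hz₂⟩ := val_mem_gap_of_notMem (by omega) (by omega) h.1
  obtain ⟨hy₁, hy₂⟩ := val_mem_gap_of_notMem (by omega) (by omega) h.2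
  have hdvd : (p : ℤ) ∣ 4 * z.val - (4 * z).val - p :=
    (ZMod.intCast_zmod_eq_zero_iff_dvd _ p).1 (by simp)
  have := Int.eq_zero_of_dvd_of_nonneg_of_lt (by omega) (by omega) hdvd
  omega

lemma two_le_card_filter_two_mul_mem (hp : 3 ≤ p) (h₁ : 2 * ((p : ℤ) - 1) ≤ 5 * k₁)
    (h₂ : 2 * ((p : ℤ) - 1) ≤ 5 * k₂) :
    2 ≤ (((intervalMod p k₁ k₂).erase 0).filter (fun x => 2 * x ∈ intervalMod p k₁ k₂)).card := by
  have : Fact (1 < p) := ⟨by omega⟩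
  have : Fact (2 < p) := ⟨hp⟩
  have hmem : ∀ n : ℤ, (-k₁ ≤ n ∧ n ≤ k₂) ∨ (-k₁ ≤ n - p ∧ n - p ≤ k₂) ∨
      (-k₁ ≤ n + p ∧ n + p ≤ k₂) → (n : ZMod p) ∈ intervalMod p k₁ k₂ := by
    rintro n (h | h | h)
    · exact intCast_mem_intervalMod n 0 (by omega) (by omega)
    · exact intCast_mem_intervalMod n 1 (by omega) (by omega)
    · exact intCast_mem_intervalMod n (-1) (by omega) (by omega)
  have hsub : ({1, -1} : Finset (ZMod p)) ⊆
      ((intervalMod p k₁ k₂).erase 0).filter (fun x => 2 * x ∈ intervalMod p k₁ k₂) := by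
    intro x hx
    simp only [mem_insert, mem_singleton] at hx
    rcases hx with rfl | rfl
    · refine mem_filter.2 ⟨mem_erase.2 ⟨one_ne_zero, by exact_mod_cast hmem 1 (by omega)⟩, ?_⟩
      rw [mul_one]
      exact_mod_cast hmem 2 (by omega)
    · refine mem_filter.2 ⟨mem_erase.2 ⟨neg_ne_zero.2 one_ne_zero,
        by exact_mod_cast hmem (-1) (by omega)⟩, ?_⟩
      rw [mul_neg_one]
      exact_mod_cast hmem (-2) (by omega)
  exact (card_pair ZMod.neg_one_ne_one.symm).symm.le.trans (card_le_card hsub)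

end intervalMod

lemma two_mul_sub_one_le_five_mul {p : ℕ} {k : ℤ} (h : (0.4 : ℚ) * ((p : ℚ) - 1) ≤ (k : ℚ)) :
    2 * ((p : ℤ) - 1) ≤ 5 * k := by
  have : ((2 * ((p : ℤ) - 1) : ℤ) : ℚ) ≤ ((5 * k : ℤ) : ℚ) := by push_cast; linarith
  exact_mod_cast this

/-- For p ≥ 3 prime and k₁, k₂ ≥ 0.4(p-1), the interval
I = {-k₁, …, k₂} mod p admits a nontrivial multiplicative decomposition. -/
theorem symmetric_long_interval_decomposition
    (p : ℕ) [Fact p.Prime] (hp : 3 ≤ p)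
    (k₁ k₂ : ℤ)
    (hk₁ : (0.4 : ℚ) * ((p : ℚ) - 1) ≤ (k₁ : ℚ))
    (hk₂ : (0.4 : ℚ) * ((p : ℚ) - 1) ≤ (k₂ : ℚ)) :
    ∃ A B : Finset (ZMod p), 2 ≤ A.card ∧ 2 ≤ B.card ∧
      ((Finset.Icc (-k₁) k₂).image (fun n : ℤ => (n : ZMod p))).erase 0 = A * B := by
  have h₁ := two_mul_sub_one_le_five_mul hk₁
  have h₂ := two_mul_sub_one_le_five_mul hk₂
  have h2 : (2 : ZMod p) ≠ 0 := Ring.two_ne_zero (by rw [ZMod.ringChar_zmod_n]; omega)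
  have hsplit : ∀ x ∈ intervalMod p k₁ k₂, x ≠ 0 →
      2 * x ∈ intervalMod p k₁ k₂ ∨ 2⁻¹ * x ∈ intervalMod p k₁ k₂ := fun x _ _ => by
    have h4 : 4 * (2⁻¹ * x) = 2 * x := by field_simp; ring
    rw [← h4]
    exact (mem_or_four_mul_mem h₁ h₂ _).symm
  refine ⟨{1, 2}, _, ?_, two_le_card_filter_two_mul_mem hp h₁ h₂,
    erase_zero_eq_pair_mul_filter h2 hsplit⟩
  rw [card_pair]
  intro h
  exact h2 (by linear_combination -2 * h)
end

section
/- Let p be a prime with p ≥ 11 and let k₁, k₂ be integers with k₁ ≥ 0.4(p-1), k₂ ≥ 0.4(p-1), and k₁ + k₂ < p - 1. Let I = {n mod p : -k₁ ≤ n ≤ k₂}. Then for every x ∈ 𝔽_p, at least one of 2x or 2⁻¹x belongs to I. -/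
/-!
Lift `x` to `m = x.valMinAbs`, so `2|m| < p`; the symmetry `x ↦ -x`, `k₁ ↔ k₂` lets us take
`m ≥ 0`. Then `2m` or `2m - p` represents `2x` in `[-k₁, k₂]` unless `k₂ < 2m < p - k₁`.
In that window `2⁻¹x` is represented by `m / 2` if `m` is even and by `(m - p) / 2` if `m` is
odd; as `m > k₂ / 2 ≥ (p - 1) / 5`, the bound `k₁ ≥ 2(p - 1) / 5` is just enough for
`(m - p) / 2 ≥ -k₁`.
-/

open Finset

namespace Int

theorem exists_mem_Icc_modEq_two_mul_or_two_mul_modEq_of_nonneg {p k₁ k₂ m : ℤ} (hp : Odd p)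
    (hk₁ : 2 * (p - 1) ≤ 5 * k₁) (hk₂ : 2 * (p - 1) ≤ 5 * k₂) (hm₀ : 0 ≤ m) (hm : 2 * m < p) :
    ∃ n ∈ Icc (-k₁) k₂, n ≡ 2 * m [ZMOD p] ∨ 2 * n ≡ m [ZMOD p] := by
  by_cases h_double : 2 * m ≤ k₂
  · exact ⟨2 * m, mem_Icc.mpr ⟨by omega, h_double⟩, .inl rfl⟩
  by_cases h_wrap : p - k₁ ≤ 2 * m
  · exact ⟨2 * m - p, mem_Icc.mpr ⟨by omega, by omega⟩, .inl (modEq_iff_dvd.mpr ⟨1, by ring⟩)⟩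
  rcases m.even_or_odd with ⟨t, rfl⟩ | hm_odd
  · exact ⟨t, mem_Icc.mpr ⟨by omega, by omega⟩, .inr (by rw [two_mul])⟩
  · obtain ⟨n, hn⟩ := hm_odd.sub_odd hp
    exact ⟨n, mem_Icc.mpr ⟨by omega, by omega⟩, .inr (modEq_iff_dvd.mpr ⟨1, by omega⟩)⟩

theorem exists_mem_Icc_modEq_two_mul_or_two_mul_modEq {p k₁ k₂ m : ℤ} (hp : Odd p)
    (hk₁ : 2 * (p - 1) ≤ 5 * k₁) (hk₂ : 2 * (p - 1) ≤ 5 * k₂) (hm : 2 * |m| < p) :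
    ∃ n ∈ Icc (-k₁) k₂, n ≡ 2 * m [ZMOD p] ∨ 2 * n ≡ m [ZMOD p] := by
  rcases le_or_gt 0 m with hm₀ | hm₀
  · rw [abs_of_nonneg hm₀] at hm
    exact exists_mem_Icc_modEq_two_mul_or_two_mul_modEq_of_nonneg hp hk₁ hk₂ hm₀ hm
  · rw [abs_of_neg hm₀] at hm
    obtain ⟨n, hn, h⟩ :=
      exists_mem_Icc_modEq_two_mul_or_two_mul_modEq_of_nonneg hp hk₂ hk₁ (neg_nonneg.mpr hm₀.le) hm
    rw [mem_Icc] at hn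
    refine ⟨-n, mem_Icc.mpr ⟨by omega, by omega⟩, ?_⟩
    rcases h with h | h
    · exact .inl (by simpa using h.neg)
    · exact .inr (by simpa using h.neg)

end Int

namespace ZMod

variable {n : ℕ}

theorem isUnit_two_of_odd (hn : Odd n) : IsUnit (2 : ZMod n) := by
  exact_mod_cast (isUnit_iff_coprime 2 n).mpr hn.coprime_two_left

theorem two_mul_abs_valMinAbs_lt (hn : Odd n) (x : ZMod n) : 2 * |x.valMinAbs| < n := by
  have : NeZero n := ⟨hn.pos.ne'⟩
  obtain ⟨hlo, hhi⟩ := Set.mem_Ioc.mp x.valMinAbs_mem_Ioc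
  obtain ⟨r, rfl⟩ := hn
  rcases abs_cases x.valMinAbs with ⟨h, -⟩ | ⟨h, -⟩ <;> push_cast at * <;> omega

theorem two_mul_or_inv_two_mul_mem_image_Icc (hn : Odd n) {k₁ k₂ : ℤ}
    (hk₁ : 2 * ((n : ℤ) - 1) ≤ 5 * k₁) (hk₂ : 2 * ((n : ℤ) - 1) ≤ 5 * k₂) (x : ZMod n) :
    2 * x ∈ (Icc (-k₁) k₂).image ((↑) : ℤ → ZMod n) ∨
      2⁻¹ * x ∈ (Icc (-k₁) k₂).image ((↑) : ℤ → ZMod n) := by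
  obtain ⟨m, hm, h⟩ := Int.exists_mem_Icc_modEq_two_mul_or_two_mul_modEq
    (by exact_mod_cast hn) hk₁ hk₂ (two_mul_abs_valMinAbs_lt hn x)
  rcases h with h | h
  · exact .inl (mem_image.mpr ⟨m, hm, by simpa using (intCast_eq_intCast_iff _ _ _).mpr h⟩)
  · have hx : 2 * (m : ZMod n) = x := by simpa using (intCast_eq_intCast_iff _ _ _).mpr h
    refine .inr (mem_image.mpr ⟨m, hm, ?_⟩)
    rw [← hx, ← mul_assoc, inv_mul_of_unit _ (isUnit_two_of_odd hn), one_mul]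

end ZMod

theorem double_or_half_in_interval_general
    (p : ℕ) [Fact p.Prime] (hp : 11 ≤ p)
    (k₁ k₂ : ℤ)
    (hk₁ : (0.4 : ℚ) * ((p : ℚ) - 1) ≤ (k₁ : ℚ))
    (hk₂ : (0.4 : ℚ) * ((p : ℚ) - 1) ≤ (k₂ : ℚ))
    (I : Finset (ZMod p))
    (hI : I = (Finset.Icc (-k₁) k₂).image (fun n : ℤ => (n : ZMod p))) :
    ∀ x : ZMod p, 2 * x ∈ I ∨ (2 : ZMod p)⁻¹ * x ∈ I := by
  subst hI
  exact ZMod.two_mul_or_inv_two_mul_mem_image_Icc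
    ((Fact.out : p.Prime).odd_of_ne_two (by omega)) (by qify; linarith) (by qify; linarith)

/-- For p ≥ 11 and k₁, k₂ ≥ 0.4(p-1) with k₁ + k₂ < p - 1, every x ∈ 𝔽_p has
2x ∈ I or 2⁻¹x ∈ I, where I is the image of [-k₁, k₂]. -/
theorem double_or_half_in_interval
    (p : ℕ) [Fact p.Prime] (hp : 11 ≤ p)
    (k₁ k₂ : ℤ)
    (hk₁ : (0.4 : ℚ) * ((p : ℚ) - 1) ≤ (k₁ : ℚ))
    (hk₂ : (0.4 : ℚ) * ((p : ℚ) - 1) ≤ (k₂ : ℚ))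
    (hk : k₁ + k₂ < (p : ℤ) - 1)
    (I : Finset (ZMod p))
    (hI : I = (Finset.Icc (-k₁) k₂).image (fun n : ℤ => (n : ZMod p))) :
    ∀ x : ZMod p, 2 * x ∈ I ∨ (2 : ZMod p)⁻¹ * x ∈ I :=
  double_or_half_in_interval_general p hp k₁ k₂ hk₁ hk₂ I hI
end

section
/- Let p be prime and I = {n+1, n+2, ..., n+N} ⊆ 𝔽_p an interval with N < (p-1)/32. If I \ {0} = A·B for sets A, B ⊆ 𝔽_p with |A| ≥ 2 and |B| ≥ 2, then N - 1 ≤ |A|·|B| ≤ 32N. (This uses Bourgain's sum-product estimate: |8XY - 8XY| ≥ (1/2)·min(|X||Y|, p-1) for X, Y ⊆ 𝔽_p with X ≠ {0}, Y ≠ {0}.) -/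
/-!
Every element of `8(AB)` is `8n + j` with `8 ≤ j ≤ 8N`, so `8AB - 8AB` lies among the at most
`16N` residues of `[8 - 8N, 8N - 8]`. Bourgain's estimate then gives
`min(|A||B|, p - 1) ≤ 32N < p - 1`, hence `|A||B| ≤ 32N`. The lower bound is just
`N - 1 ≤ |I \ {0}| = |AB| ≤ |A||B|`.
-/

open Finset Pointwise

section IntervalSumsets

variable {R : Type*} [AddCommGroupWithOne R] [DecidableEq R]

theorem iterSumset_subset_image_Icc {S : Finset R} {a : R} {lo hi : ℕ}
    (hS : S ⊆ (Icc lo hi).image (fun i : ℕ => a + i)) (m : ℕ) :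
    iterSumset m S ⊆ (Icc (m * lo) (m * hi)).image (fun i : ℕ => m • a + i) := by
  induction m with
  | zero => simp [iterSumset]
  | succ m ih =>
    intro x hx
    obtain ⟨y, hy, s, hs, rfl⟩ := mem_add.mp hx
    obtain ⟨j, hj, rfl⟩ := mem_image.mp (ih hy)
    obtain ⟨i, hi, rfl⟩ := mem_image.mp (hS hs)
    rw [mem_Icc] at hj hi
    refine mem_image.mpr ⟨j + i, mem_Icc.mpr ⟨by nlinarith, by nlinarith⟩, ?_⟩
    push_cast
    rw [succ_nsmul]
    abel

theorem card_sub_le_of_subset_image_Icc {S : Finset R} {a : R} {lo hi : ℕ}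
    (hS : S ⊆ (Icc lo hi).image (fun i : ℕ => a + i)) :
    (S - S).card ≤ 2 * (hi - lo) + 1 := by
  have hdiff : S - S ⊆ (Icc ((lo : ℤ) - hi) ((hi : ℤ) - lo)).image (fun j : ℤ => (j : R)) := by
    intro x hx
    obtain ⟨y, hy, z, hz, rfl⟩ := mem_sub.mp hx
    obtain ⟨i, hi, rfl⟩ := mem_image.mp (hS hy)
    obtain ⟨k, hk, rfl⟩ := mem_image.mp (hS hz)
    rw [mem_Icc] at hi hk
    refine mem_image.mpr ⟨(i : ℤ) - k, mem_Icc.mpr ⟨by omega, by omega⟩, ?_⟩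
    push_cast
    abel
  calc (S - S).card ≤ _ := card_le_card hdiff
    _ ≤ (Icc ((lo : ℤ) - hi) ((hi : ℤ) - lo)).card := card_image_le
    _ ≤ 2 * (hi - lo) + 1 := by rw [Int.card_Icc]; omega

end IntervalSumsets

theorem card_image_add_natCast_Icc {R : Type*} [AddGroupWithOne R] [DecidableEq R]
    (p : ℕ) [CharP R p] (a : R) {N : ℕ} (hN : N < p) :
    ((Icc 1 N).image (fun i : ℕ => a + i)).card = N := by
  rw [card_image_of_injOn, Nat.card_Icc, Nat.add_sub_cancel]
  intro i hi j hj hij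
  rw [coe_Icc, Set.mem_Icc] at hi hj
  exact ((CharP.natCast_eq_natCast R p).mp (add_left_cancel hij)).eq_of_lt_of_lt
    (by omega) (by omega)

theorem decomposition_cardinality_bound_general
    (p : ℕ) (n : ℤ) (N : ℕ) (hN : 32 * N < p - 1)
    (bourgain : ∀ X Y : Finset (ZMod p), X.Nonempty → Y.Nonempty →
      X ≠ ({0} : Finset (ZMod p)) → Y ≠ ({0} : Finset (ZMod p)) →
      min (X.card * Y.card) (p - 1) ≤
        2 * (iterSumset 8 (X * Y) - iterSumset 8 (X * Y)).card)
    (I : Finset (ZMod p))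
    (hI : I = (Finset.Icc 1 N).image (fun i : ℕ => (n : ZMod p) + (i : ZMod p)))
    (A B : Finset (ZMod p)) (hA : 2 ≤ A.card) (hB : 2 ≤ B.card)
    (hAB : I.erase 0 = A * B) :
    N - 1 ≤ A.card * B.card ∧ A.card * B.card ≤ 32 * N := by
  have hA' : A.Nontrivial := one_lt_card_iff_nontrivial.mp hA
  have hB' : B.Nontrivial := one_lt_card_iff_nontrivial.mp hB
  have hsub : A * B ⊆ (Icc 1 N).image (fun i : ℕ => (n : ZMod p) + i) :=
    hAB ▸ hI ▸ erase_subset 0 I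
  -- the type is written out so that its instance path matches the one in `bourgain`
  have hdiff : (iterSumset 8 (A * B) - iterSumset 8 (A * B)).card ≤ 2 * (8 * N - 8 * 1) + 1 :=
    card_sub_le_of_subset_image_Icc (iterSumset_subset_image_Icc hsub 8)
  have hsumprod := bourgain A B hA'.nonempty hB'.nonempty hA'.ne_singleton hB'.ne_singleton
  have hN1 : 1 ≤ N :=
    nonempty_Icc.mp (image_nonempty.mp ((hA'.nonempty.mul hB'.nonempty).mono hsub))
  refine ⟨?_, by omega⟩
  calc N - 1 = I.card - 1 := by rw [hI, card_image_add_natCast_Icc p _ (by omega)]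
    _ ≤ (I.erase 0).card := pred_card_le_card_erase
    _ = (A * B).card := by rw [hAB]
    _ ≤ A.card * B.card := card_mul_le

/-- Shparlinski's observation: assuming Bourgain's sum-product estimate, a
nontrivial multiplicative decomposition I \ {0} = A·B of an interval of
length N < (p-1)/32 forces N - 1 ≤ |A||B| ≤ 32N. -/
theorem decomposition_cardinality_bound
    (p : ℕ) [Fact p.Prime] (n : ℤ) (N : ℕ) (hN : 32 * N < p - 1)
    (bourgain : ∀ X Y : Finset (ZMod p), X.Nonempty → Y.Nonempty →
      X ≠ ({0} : Finset (ZMod p)) → Y ≠ ({0} : Finset (ZMod p)) →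
      min (X.card * Y.card) (p - 1) ≤
        2 * (iterSumset 8 (X * Y) - iterSumset 8 (X * Y)).card)
    (I : Finset (ZMod p))
    (hI : I = (Finset.Icc 1 N).image (fun i : ℕ => (n : ZMod p) + (i : ZMod p)))
    (A B : Finset (ZMod p)) (hA : 2 ≤ A.card) (hB : 2 ≤ B.card)
    (hAB : I.erase 0 = A * B) :
    N - 1 ≤ A.card * B.card ∧ A.card * B.card ≤ 32 * N :=
  decomposition_cardinality_bound_general p n N hN bourgain I hI A B hA hB hAB
end

section
/- Let a₀, b₀ be positive integers and d ≥ 1 an integer with a₀ ≥ max(2, (d+1)/2) and b₀ ≥ max(2, (d+1)/2). If a₀b₀ - d = a₁b₁ for integers a₁, b₁ with |a₁| ≤ a₀ - 1 and |b₁| ≤ b₀ - 1, then d ≥ a₀ + b₀ - 1, and hence a₀ = b₀ = (d+1)/2 and d ≥ 3. -/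
/-! Bounding `a₁ * b₁` by `|a₁| * |b₁| ≤ (a₀ - 1) * (b₀ - 1)` turns the identity
`a₀ * b₀ - d = a₁ * b₁` into `d ≥ a₀ + b₀ - 1`. Together with `2 * a₀, 2 * b₀ ≥ d + 1` this
forces `2 * a₀ = 2 * b₀ = d + 1`, and then `a₀ ≥ 2` gives `d ≥ 3`. -/

section LinearOrderedRing

variable {R : Type*} [CommRing R] [LinearOrder R] [IsStrictOrderedRing R]

theorem mul_le_mul_of_abs_le {x y a b : R} (hx : |x| ≤ a) (hy : |y| ≤ b) : x * y ≤ a * b :=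
  calc x * y ≤ |x * y| := le_abs_self _
    _ = |x| * |y| := abs_mul x y
    _ ≤ a * b := mul_le_mul hx hy (abs_nonneg y) ((abs_nonneg x).trans hx)

theorem add_sub_one_le_of_mul_sub_eq_mul {a₀ b₀ d a₁ b₁ : R} (heq : a₀ * b₀ - d = a₁ * b₁)
    (ha₁ : |a₁| ≤ a₀ - 1) (hb₁ : |b₁| ≤ b₀ - 1) : a₀ + b₀ - 1 ≤ d := by
  have := mul_le_mul_of_abs_le ha₁ hb₁
  linear_combination heq + this

end LinearOrderedRing

theorem extremal_product_inequality_general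
    (a₀ b₀ d a₁ b₁ : ℤ)
    (ha₀ : 2 ≤ a₀) (ha₀d : d + 1 ≤ 2 * a₀)
    (hb₀d : d + 1 ≤ 2 * b₀)
    (heq : a₀ * b₀ - d = a₁ * b₁)
    (ha₁ : |a₁| ≤ a₀ - 1) (hb₁ : |b₁| ≤ b₀ - 1) :
    a₀ + b₀ - 1 ≤ d ∧ 2 * a₀ = d + 1 ∧ 2 * b₀ = d + 1 ∧ 3 ≤ d := by
  have hsum := add_sub_one_le_of_mul_sub_eq_mul heq ha₁ hb₁
  omega

/-- The key integer inequality from the rational case: if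
a₀b₀ - d = a₁b₁ with |a₁| ≤ a₀ - 1 and |b₁| ≤ b₀ - 1, then
d ≥ a₀ + b₀ - 1, hence a₀ = b₀ = (d+1)/2 and d ≥ 3. -/
theorem extremal_product_inequality
    (a₀ b₀ d a₁ b₁ : ℤ)
    (ha₀pos : 0 < a₀) (hb₀pos : 0 < b₀) (hd : 1 ≤ d)
    (ha₀ : 2 ≤ a₀) (ha₀d : d + 1 ≤ 2 * a₀)
    (hb₀ : 2 ≤ b₀) (hb₀d : d + 1 ≤ 2 * b₀)
    (heq : a₀ * b₀ - d = a₁ * b₁)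
    (ha₁ : |a₁| ≤ a₀ - 1) (hb₁ : |b₁| ≤ b₀ - 1) :
    a₀ + b₀ - 1 ≤ d ∧ 2 * a₀ = d + 1 ∧ 2 * b₀ = d + 1 ∧ 3 ≤ d :=
  extremal_product_inequality_general a₀ b₀ d a₁ b₁ ha₀ ha₀d hb₀d heq ha₁ hb₁
end

section
/- Let p be a prime, d an integer with |d| ≤ (p-1)/2, M a positive integer with 4M ≤ (p-1)/2, and m a positive integer. Suppose that for every i with 1 ≤ i ≤ m, the residue of i·d modulo p lies in the image of the integer interval [-2M, 2M]. Then i·d ∈ [-2M, 2M] as integers for all 1 ≤ i ≤ m; in particular |d| ≤ 2M/m. -/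
/-- If |d| ≤ (p-1)/2, 4M ≤ (p-1)/2 and every i·d (1 ≤ i ≤ m) is congruent
mod p to an integer in [-2M, 2M], then i·d ∈ [-2M, 2M] as integers for all
such i; in particular m·|d| ≤ 2M. -/
theorem multiples_stay_small
    (p : ℕ) [Fact p.Prime] (d : ℤ) (m M : ℕ) (hm : 1 ≤ m) (hM : 1 ≤ M)
    (hd : 2 * |d| ≤ (p : ℤ) - 1)
    (hMp : 2 * (4 * (M : ℤ)) ≤ (p : ℤ) - 1)
    (hcong : ∀ i : ℕ, 1 ≤ i → i ≤ m →
      ∃ z : ℤ, |z| ≤ 2 * (M : ℤ) ∧ ((i : ℤ) * d : ZMod p) = (z : ZMod p)) :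
    (∀ i : ℕ, 1 ≤ i → i ≤ m → |(i : ℤ) * d| ≤ 2 * (M : ℤ)) ∧
      (m : ℤ) * |d| ≤ 2 * (M : ℤ) := by
  have hdle : |d| ≤ ((p : ℤ) - 1) / 2 := by omega
  have key : ∀ i : ℕ, 1 ≤ i → i ≤ m → |(i : ℤ) * d| ≤ 2 * (M : ℤ) := by
    intro i hi
    induction i, hi using Nat.le_induction with
    | base =>
      intro h1
      obtain ⟨z, hz, hc⟩ := hcong 1 le_rfl h1
      have hdvd : (p : ℤ) ∣ (1 : ℤ) * d - z := by
        have hc' : (((1 : ℤ) * d : ℤ) : ZMod p) = (z : ZMod p) := by push_cast at hc ⊢; exact hc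
        exact Int.ModEq.dvd ((ZMod.intCast_eq_intCast_iff' _ _ _).mp hc').symm
      have heq : (1 : ℤ) * d - z = 0 := by
        refine Int.eq_zero_of_abs_lt_dvd hdvd ?_
        have h1 : |(1 : ℤ) * d - z| ≤ |d| + |z| := by
          calc |(1 : ℤ) * d - z| ≤ |(1:ℤ) * d| + |z| := abs_sub _ _
          _ = |d| + |z| := by rw [one_mul]
        omega
      have hz' : (1 : ℤ) * d = z := by omega
      rw [Nat.cast_one, hz']; exact hz
    | succ n hn ih =>
      intro hle
      have ihn := ih (le_trans (Nat.le_succ n) hle)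
      obtain ⟨z, hz, hc⟩ := hcong (n + 1) (by omega) hle
      have hdvd : (p : ℤ) ∣ ((n + 1 : ℕ) : ℤ) * d - z := by
        have hc' : ((((n + 1 : ℕ) : ℤ) * d : ℤ) : ZMod p) = (z : ZMod p) := by
          push_cast at hc ⊢; exact hc
        exact Int.ModEq.dvd ((ZMod.intCast_eq_intCast_iff' _ _ _).mp hc').symm
      have heq : ((n + 1 : ℕ) : ℤ) * d - z = 0 := by
        refine Int.eq_zero_of_abs_lt_dvd hdvd ?_
        have hsplit : ((n + 1 : ℕ) : ℤ) * d = (n : ℤ) * d + d := by push_cast; ring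
        have h1 : |((n + 1 : ℕ) : ℤ) * d - z| ≤ |(n : ℤ) * d| + |d| + |z| := by
          calc |((n + 1 : ℕ) : ℤ) * d - z| ≤ |((n + 1 : ℕ) : ℤ) * d| + |z| := abs_sub _ _
          _ ≤ |(n : ℤ) * d| + |d| + |z| := by
              rw [hsplit]; have := abs_add_le ((n : ℤ) * d) d; omega
        omega
      have : ((n + 1 : ℕ) : ℤ) * d = z := by omega
      rw [this]; exact hz
  refine ⟨key, ?_⟩
  have := key m hm le_rfl
  rwa [abs_mul, abs_of_nonneg (by positivity : (0:ℤ) ≤ (m:ℤ))] at this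
end

section
/- Let p ≥ 3 be a prime, k₁, k₂ ≥ 0.4(p-1) integers with k₁ + k₂ < p-1, and I = {n mod p : -k₁ ≤ n ≤ k₂}. Define A = {x ∈ I \ {0} : 2x ∈ I \ {0}} and B = {1, 2} ⊆ 𝔽_p. Then I \ {0} = A·B and |A| ≥ (k₁+k₂)/2 ≥ 0.4(p-1). -/
open Finset Pointwise

/-!
Write a nonzero residue of the interval as `x = n` with `-k₁ ≤ n ≤ k₂`. Either `2x` is again a
nonzero residue of the interval, so `x = x * 1` with `x ∈ A`, or `x = y * 2` for some `y ∈ A`: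
when `2n` leaves the interval, `y = n / 2` works for even `n`, and for odd `n` one of `2n ± p` or
`(n ± p) / 2` falls back into it, because `k₁, k₂ ≥ 0.4 (p - 1)` leaves no room for both to miss.
As `k₁ + k₂ < p`, the cast is injective on the interval, so `k₁ + k₂ = |I \ {0}| ≤ 2 |A|`.
-/

theorem Int.exists_double_or_half_mem_Icc {q k₁ k₂ n : ℤ} (hq : Odd q)
    (hk₁ : 2 * (q - 1) ≤ 5 * k₁) (hk₂ : 2 * (q - 1) ≤ 5 * k₂) (hk : k₁ + k₂ < q - 1)
    (hn : n ∈ Icc (-k₁) k₂) (hn₀ : n ≠ 0) :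
    ∃ m ∈ Icc (-k₁) k₂, m ≠ 0 ∧ (m ≡ 2 * n [ZMOD q] ∨ 2 * m ≡ n [ZMOD q]) := by
  rw [mem_Icc] at hn
  obtain ⟨r, rfl⟩ := hq
  have hshift (c a : ℤ) : a + (2 * r + 1) * c ≡ a [ZMOD 2 * r + 1] :=
    Int.modEq_iff_dvd.2 ⟨-c, by ring⟩
  by_cases hdouble : -k₁ ≤ 2 * n ∧ 2 * n ≤ k₂
  · exact ⟨2 * n, mem_Icc.2 hdouble, by omega, .inl .rfl⟩
  obtain ⟨t, ht | ht⟩ := n.even_or_odd'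
  · exact ⟨t, mem_Icc.2 ⟨by omega, by omega⟩, by omega, .inr (by rw [ht])⟩
  rcases lt_or_ge (2 * n) (-k₁) with hneg | hpos
  · by_cases hwrap : 2 * n + (2 * r + 1) ≤ k₂
    · exact ⟨2 * n + (2 * r + 1) * 1, mem_Icc.2 ⟨by omega, by omega⟩, by omega,
        .inl (hshift _ _)⟩
    · refine ⟨t + r + 1, mem_Icc.2 ⟨by omega, by omega⟩, by omega, .inr ?_⟩
      convert hshift 1 n using 2; omega
  · by_cases hwrap : -k₁ ≤ 2 * n - (2 * r + 1)
    · exact ⟨2 * n + (2 * r + 1) * (-1), mem_Icc.2 ⟨by omega, by omega⟩, by omega,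
        .inl (hshift _ _)⟩
    · refine ⟨t - r, mem_Icc.2 ⟨by omega, by omega⟩, by omega, .inr ?_⟩
      convert hshift (-1) n using 2; omega

theorem Finset.filter_mul_pair_one_eq {M : Type*} [CommMonoid M] [DecidableEq M]
    {S : Finset M} {g : M} (h : ∀ x ∈ S, g * x ∈ S ∨ ∃ y ∈ S, g * y = x) :
    S.filter (fun x => g * x ∈ S) * {1, g} = S := by
  ext x
  simp only [mem_mul, mem_filter, mem_insert, mem_singleton]
  constructor
  · rintro ⟨a, ⟨ha, hga⟩, b, rfl | rfl, rfl⟩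
    · rwa [mul_one]
    · rwa [mul_comm]
  · intro hx
    rcases h x hx with hgx | ⟨y, hy, rfl⟩
    · exact ⟨x, ⟨hx, hgx⟩, 1, .inl rfl, mul_one x⟩
    · exact ⟨y, ⟨hy, hx⟩, g, .inr rfl, mul_comm y g⟩

namespace ZMod

variable {p : ℕ} {k₁ k₂ : ℤ}

theorem intCast_injOn_Icc (hk : k₁ + k₂ < p) :
    Set.InjOn (fun n : ℤ => (n : ZMod p)) (Set.Icc (-k₁) k₂) := by
  intro m hm n hn hmn
  rw [Set.mem_Icc] at hm hn
  have hdvd : (p : ℤ) ∣ n - m := (intCast_eq_intCast_iff_dvd_sub m n p).1 hmn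
  have hsmall : |n - m| < p := abs_sub_lt_iff.2 ⟨by omega, by omega⟩
  linarith [Int.eq_zero_of_abs_lt_dvd hdvd hsmall]

theorem intCast_mem_erase_zero_image_Icc (hk : k₁ + k₂ < p) (hk₁ : 0 ≤ k₁) (hk₂ : 0 ≤ k₂) {m : ℤ}
    (hm : m ∈ Icc (-k₁) k₂) (hm₀ : m ≠ 0) :
    (m : ZMod p) ∈ ((Icc (-k₁) k₂).image (fun n : ℤ => (n : ZMod p))).erase 0 := by
  refine mem_erase.2 ⟨fun h => hm₀ ?_, mem_image_of_mem _ hm⟩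
  have h0 : (0 : ℤ) ∈ Set.Icc (-k₁) k₂ := Set.mem_Icc.2 ⟨by omega, hk₂⟩
  exact intCast_injOn_Icc hk (coe_Icc (-k₁) k₂ ▸ hm) h0 (by simpa using h)

theorem card_erase_zero_image_Icc (hk : k₁ + k₂ < p) (hk₁ : 0 ≤ k₁) (hk₂ : 0 ≤ k₂) :
    (#(((Icc (-k₁) k₂).image (fun n : ℤ => (n : ZMod p))).erase 0) : ℤ) = k₁ + k₂ := by
  have h0 : (0 : ZMod p) ∈ (Icc (-k₁) k₂).image (fun n : ℤ => (n : ZMod p)) :=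
    mem_image.2 ⟨0, mem_Icc.2 ⟨by omega, hk₂⟩, Int.cast_zero⟩
  rw [card_erase_of_mem h0, card_image_of_injOn (coe_Icc (-k₁) k₂ ▸ intCast_injOn_Icc hk)]
  have := Int.card_Icc_of_le (a := -k₁) (b := k₂) (by omega)
  omega

theorem two_mul_mem_or_eq_two_mul (hp : Odd (p : ℤ)) (hk₁ : 2 * ((p : ℤ) - 1) ≤ 5 * k₁)
    (hk₂ : 2 * ((p : ℤ) - 1) ≤ 5 * k₂) (hk : k₁ + k₂ < (p : ℤ) - 1) {x : ZMod p}
    (hx : x ∈ ((Icc (-k₁) k₂).image (fun n : ℤ => (n : ZMod p))).erase 0) :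
    2 * x ∈ ((Icc (-k₁) k₂).image (fun n : ℤ => (n : ZMod p))).erase 0 ∨
      ∃ y ∈ ((Icc (-k₁) k₂).image (fun n : ℤ => (n : ZMod p))).erase 0, 2 * y = x := by
  obtain ⟨hx₀, hxI⟩ := mem_erase.1 hx
  obtain ⟨n, hn, rfl⟩ := mem_image.1 hxI
  have hn₀ : n ≠ 0 := by rintro rfl; exact hx₀ Int.cast_zero
  obtain ⟨m, hm, hm₀, hdouble | hhalf⟩ := Int.exists_double_or_half_mem_Icc hp hk₁ hk₂ hk hn hn₀
  · left
    have hmn : (m : ZMod p) = 2 * n := by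
      exact_mod_cast (intCast_eq_intCast_iff m (2 * n) p).2 hdouble
    exact hmn ▸ intCast_mem_erase_zero_image_Icc (by omega) (by omega) (by omega) hm hm₀
  · right
    refine ⟨m, intCast_mem_erase_zero_image_Icc (by omega) (by omega) (by omega) hm hm₀, ?_⟩
    exact_mod_cast (intCast_eq_intCast_iff (2 * m) n p).2 hhalf

end ZMod

/-- Explicit decomposition for symmetric long intervals: with
A = {x ∈ I \ {0} : 2x ∈ I \ {0}} and B = {1, 2}, one has I \ {0} = A·B and
|A| ≥ (k₁ + k₂)/2 ≥ 0.4(p-1). -/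
theorem explicit_decomposition_long_interval
    (p : ℕ) [Fact p.Prime] (hp : 3 ≤ p)
    (k₁ k₂ : ℤ)
    (hk₁ : (0.4 : ℚ) * ((p : ℚ) - 1) ≤ (k₁ : ℚ))
    (hk₂ : (0.4 : ℚ) * ((p : ℚ) - 1) ≤ (k₂ : ℚ))
    (hk : k₁ + k₂ < (p : ℤ) - 1)
    (I A B : Finset (ZMod p))
    (hI : I = (Finset.Icc (-k₁) k₂).image (fun n : ℤ => (n : ZMod p)))
    (hA : A = (I.erase 0).filter (fun x => 2 * x ∈ I.erase 0))
    (hB : B = ({1, 2} : Finset (ZMod p))) :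
    I.erase 0 = A * B ∧
      ((k₁ : ℚ) + (k₂ : ℚ)) / 2 ≤ (A.card : ℚ) ∧
      (0.4 : ℚ) * ((p : ℚ) - 1) ≤ ((k₁ : ℚ) + (k₂ : ℚ)) / 2 := by
  have hodd : Odd (p : ℤ) := by
    exact_mod_cast (Fact.out : p.Prime).odd_of_ne_two (by omega)
  norm_num at hk₁ hk₂
  have h5k₁ : 2 * ((p : ℤ) - 1) ≤ 5 * k₁ := by
    exact_mod_cast (by linarith : 2 * ((p : ℚ) - 1) ≤ 5 * k₁)
  have h5k₂ : 2 * ((p : ℤ) - 1) ≤ 5 * k₂ := by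
    exact_mod_cast (by linarith : 2 * ((p : ℚ) - 1) ≤ 5 * k₂)
  subst hI hB
  have hdecomp :=
    filter_mul_pair_one_eq fun x hx => ZMod.two_mul_mem_or_eq_two_mul hodd h5k₁ h5k₂ hk hx
  rw [← hA] at hdecomp
  refine ⟨hdecomp.symm, ?_, by linarith⟩
  have hcard : (#(A * {1, 2}) : ℤ) = k₁ + k₂ :=
    hdecomp ▸ ZMod.card_erase_zero_image_Icc (by omega) (by omega) (by omega)
  have hle : ((k₁ + k₂ : ℤ) : ℚ) ≤ #A * 2 := by
    rw [← hcard]; exact_mod_cast card_mul_le.trans (Nat.mul_le_mul_left _ card_le_two)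
  push_cast at hle
  linarith
end
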